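/- Let R be a decomposable norm on ℝ^p, i.e., R(u) = R(u_S) + R(u_{S^c}) for every index set S and every u, where u_S is u restricted to S (zero outside S). Suppose β* is supported on S (β*_{S^c} = 0) and v ∈ ℝ^p satisfies R(v)/2 + R(β*) − R(β* + v) ≥ 0. Then R(v_{S^c}) ≤ 3R(v_S). -/

import Mathlib

/-! Writing `v = v_S + v_{S^c}`, decomposability and `β*_{S^c} = 0` give
`R(β*) + R(v_{S^c}) = R(β* + v_{S^c}) ≤ R(β* + v) + R(v_S)`, while the cone condition bounds
`R(β* + v)` by `R(β*) + (R(v_S) + R(v_{S^c}))/2`. -/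

section Seminorm

variable {E : Type*} [AddCommGroup E] (R : E → ℝ)

theorem map_neg_of_map_smul_eq_abs_mul [Module ℝ E]
    (hR_smul : ∀ (c : ℝ) (u : E), R (c • u) = |c| * R u) (u : E) : R (-u) = R u := by
  simpa using hR_smul (-1) u

theorem le_three_mul_of_cone_condition (hR_add : ∀ u v, R (u + v) ≤ R u + R v)
    (hR_neg : ∀ u, R (-u) = R u) {β a b : E} (hsplit : R (a + b) = R a + R b)
    (hβb : R (β + b) = R β + R b) (hv : 0 ≤ R (a + b) / 2 + R β - R (β + (a + b))) :
    R b ≤ 3 * R a := by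
  have htri : R (β + b) ≤ R (β + (a + b)) + R a := by
    calc R (β + b) = R (β + (a + b) + -a) := by congr 1; abel
      _ ≤ R (β + (a + b)) + R (-a) := hR_add _ _
      _ = R (β + (a + b)) + R a := by rw [hR_neg]
  linarith

end Seminorm

section Restriction

variable {ι M : Type*} [DecidableEq ι] [AddZeroClass M]

theorem ite_mem_add_ite_notMem (S : Finset ι) (u : ι → M) :
    ((fun i => if i ∈ S then u i else 0) + fun i => if i ∈ S then 0 else u i) = u := by
  ext i
  by_cases h : i ∈ S <;> simp [h]

theorem map_add_of_support_decomposable (R : (ι → M) → ℝ) (S : Finset ι)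
    (hdec : ∀ u : ι → M,
      R u = R (fun i => if i ∈ S then u i else 0) + R (fun i => if i ∈ S then 0 else u i))
    {β w : ι → M} (hβ : ∀ i ∉ S, β i = 0) (hw : ∀ i ∈ S, w i = 0) :
    R (β + w) = R β + R w := by
  rw [hdec (β + w)]
  congr 2 <;> ext i <;> by_cases h : i ∈ S <;> simp [h, hβ, hw]

end Restriction

theorem decomposable_cone_inclusion_general (p : ℕ) (R : (Fin p → ℝ) → ℝ)
    (hR_add : ∀ u v, R (u + v) ≤ R u + R v)
    (hR_smul : ∀ (c : ℝ) (u), R (c • u) = |c| * R u)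
    (hdec : ∀ (S : Finset (Fin p)) (u : Fin p → ℝ),
      R u = R (fun i => if i ∈ S then u i else 0) + R (fun i => if i ∈ S then 0 else u i))
    (S : Finset (Fin p)) (βstar v : Fin p → ℝ)
    (hsupp : ∀ i ∉ S, βstar i = 0)
    (hv : 0 ≤ R v / 2 + R βstar - R (βstar + v)) :
    R (fun i => if i ∈ S then 0 else v i) ≤ 3 * R (fun i => if i ∈ S then v i else 0) := by
  set vS : Fin p → ℝ := fun i => if i ∈ S then v i else 0
  set vSc : Fin p → ℝ := fun i => if i ∈ S then 0 else v i
  have hsum : vS + vSc = v := ite_mem_add_ite_notMem S v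
  have hsplit : R (vS + vSc) = R vS + R vSc := by rw [hsum]; exact hdec S v
  have hβvSc : R (βstar + vSc) = R βstar + R vSc :=
    map_add_of_support_decomposable R S (hdec S) hsupp fun i hi => if_pos hi
  rw [← hsum] at hv
  exact le_three_mul_of_cone_condition R hR_add (map_neg_of_map_smul_eq_abs_mul R hR_smul)
    hsplit hβvSc hv

/-- For a decomposable norm `R`, if `β*` is supported on `S` and `v` lies in the LASSO
cone, then `R(v_{S^c}) ≤ 3R(v_S)`. -/
theorem decomposable_cone_inclusion (p : ℕ) (R : (Fin p → ℝ) → ℝ)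
    (hR_nonneg : ∀ u, 0 ≤ R u)
    (hR_zero : ∀ u, R u = 0 ↔ u = 0)
    (hR_add : ∀ u v, R (u + v) ≤ R u + R v)
    (hR_smul : ∀ (c : ℝ) (u), R (c • u) = |c| * R u)
    (hdec : ∀ (S : Finset (Fin p)) (u : Fin p → ℝ),
      R u = R (fun i => if i ∈ S then u i else 0) + R (fun i => if i ∈ S then 0 else u i))
    (S : Finset (Fin p)) (βstar v : Fin p → ℝ)
    (hsupp : ∀ i ∉ S, βstar i = 0)
    (hv : 0 ≤ R v / 2 + R βstar - R (βstar + v)) :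
    R (fun i => if i ∈ S then 0 else v i) ≤ 3 * R (fun i => if i ∈ S then v i else 0) :=
  decomposable_cone_inclusion_general p R hR_add hR_smul hdec S βstar v hsupp hv
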